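/- arXiv:2401.16407 — 2 statements merged into one kernel-verified Lean document; each statement's English description precedes it below -/
import Mathlib

section
/- Let Θ be a measurable space with a probability measure Q, let a, b : Θ → ℝ be measurable with a integrable with respect to Q and 0 ≤ b(θ) ≤ 1 for all θ, and let γ ∈ ℝ. Then γ·∫ a dQ − log(1 + (e^γ − 1)·∫ b dQ) ≤ ∫ ( γ·a(θ) − log(1 + (e^γ − 1)·b(θ)) ) dQ(θ). -/
open MeasureTheory

/-- Jensen-inequality step: for `b` taking values in `[0,1]` and any real `γ`,
`γ·∫a dQ − log(1 + (e^γ − 1)·∫b dQ) ≤ ∫ (γ·a(θ) − log(1 + (e^γ − 1)·b(θ))) dQ(θ)`. -/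
theorem jensen_step_bayesian_deviation
    {Θ : Type*} [MeasurableSpace Θ] (Q : Measure Θ) [IsProbabilityMeasure Q]
    (a b : Θ → ℝ) (ha_meas : Measurable a) (hb_meas : Measurable b)
    (ha : Integrable a Q) (hb : ∀ θ, b θ ∈ Set.Icc (0 : ℝ) 1) (γ : ℝ) :
    γ * (∫ θ, a θ ∂Q) - Real.log (1 + (Real.exp γ - 1) * ∫ θ, b θ ∂Q) ≤
      ∫ θ, (γ * a θ - Real.log (1 + (Real.exp γ - 1) * b θ)) ∂Q := by
  set c : ℝ := Real.exp γ - 1 with hc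
  have hb_int : Integrable b Q := by
    refine (integrable_const (1:ℝ)).mono' hb_meas.aestronglyMeasurable ?_
    filter_upwards with θ
    rw [Real.norm_eq_abs, abs_le]
    exact ⟨le_trans (by norm_num) (hb θ).1, (hb θ).2⟩
  set m : ℝ := ∫ θ, b θ ∂Q with hm
  have hm0 : 0 ≤ m := integral_nonneg fun θ => (hb θ).1
  have hm1 : m ≤ 1 := by
    calc m ≤ ∫ _θ, (1:ℝ) ∂Q :=
          integral_mono hb_int (integrable_const 1) fun θ => (hb θ).2
      _ = 1 := by simp
  have hpos : ∀ x : ℝ, 0 ≤ x → x ≤ 1 → 0 < 1 + c * x := by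
    intro x hx0 hx1
    rcases le_or_gt 0 c with h | h
    · nlinarith
    · nlinarith [Real.exp_pos γ]
  have hp : 0 < 1 + c * m := hpos m hm0 hm1
  -- integrability of the log term
  have hg_meas : Measurable fun θ => Real.log (1 + c * b θ) :=
    Real.measurable_log.comp ((hb_meas.const_mul c).const_add 1)
  have hg_bound : ∀ θ, |Real.log (1 + c * b θ)| ≤ |γ| := by
    intro θ
    obtain ⟨h0, h1⟩ := hb θ
    have hq : 0 < 1 + c * b θ := hpos _ h0 h1
    rcases le_or_gt 0 c with h | h
    · have hγ : 0 ≤ γ := by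
        by_contra hγ
        push_neg at hγ
        have := Real.exp_lt_one_iff.mpr hγ
        simp only [hc] at h; linarith
      have hle : 1 + c * b θ ≤ Real.exp γ := by nlinarith
      have h1' : (1:ℝ) ≤ 1 + c * b θ := by nlinarith
      have hlog0 : 0 ≤ Real.log (1 + c * b θ) := Real.log_nonneg h1'
      have hlogγ : Real.log (1 + c * b θ) ≤ γ :=
        (Real.log_le_iff_le_exp hq).mpr hle
      rw [abs_of_nonneg hlog0, abs_of_nonneg hγ]
      exact hlogγ
    · have hγ : γ ≤ 0 := by
        by_contra hγ
        push_neg at hγ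
        have : (1:ℝ) < Real.exp γ := Real.one_lt_exp_iff.mpr hγ
        simp only [hc] at h; linarith
      have hge : Real.exp γ ≤ 1 + c * b θ := by nlinarith
      have h1' : 1 + c * b θ ≤ 1 := by nlinarith
      have hlog0 : Real.log (1 + c * b θ) ≤ 0 := Real.log_nonpos (by linarith) h1'
      have hlogγ : γ ≤ Real.log (1 + c * b θ) :=
        (Real.le_log_iff_exp_le hq).mpr hge
      rw [abs_of_nonpos hlog0, abs_of_nonpos hγ]
      linarith
  have hg_int : Integrable (fun θ => Real.log (1 + c * b θ)) Q := by
    refine (integrable_const |γ|).mono' hg_meas.aestronglyMeasurable ?_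
    filter_upwards with θ
    rw [Real.norm_eq_abs]
    exact hg_bound θ
  -- tangent line bound
  have htangent : ∀ θ, Real.log (1 + c * b θ) ≤
      Real.log (1 + c * m) + (c / (1 + c * m)) * (b θ - m) := by
    intro θ
    obtain ⟨h0, h1⟩ := hb θ
    have hq : 0 < 1 + c * b θ := hpos _ h0 h1
    have hdiv : Real.log ((1 + c * b θ) / (1 + c * m)) ≤
        (1 + c * b θ) / (1 + c * m) - 1 :=
      Real.log_le_sub_one_of_pos (div_pos hq hp)
    rw [Real.log_div hq.ne' hp.ne'] at hdiv
    have heq : (1 + c * b θ) / (1 + c * m) - 1 = (c / (1 + c * m)) * (b θ - m) := by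
      field_simp
      ring
    rw [heq] at hdiv
    linarith
  -- integral of tangent line
  have hrhs_int : Integrable (fun θ =>
      Real.log (1 + c * m) + (c / (1 + c * m)) * (b θ - m)) Q :=
    (integrable_const _).add ((hb_int.sub (integrable_const m)).const_mul _)
  have hkey : ∫ θ, Real.log (1 + c * b θ) ∂Q ≤ Real.log (1 + c * m) := by
    calc ∫ θ, Real.log (1 + c * b θ) ∂Q
        ≤ ∫ θ, (Real.log (1 + c * m) + (c / (1 + c * m)) * (b θ - m)) ∂Q :=
          integral_mono hg_int hrhs_int htangent
      _ = Real.log (1 + c * m) := by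
          have hsub : Integrable (fun θ => b θ - m) Q := hb_int.sub (integrable_const m)
          rw [integral_add (integrable_const _) (hsub.const_mul _),
            integral_const_mul, integral_sub hb_int (integrable_const m)]
          simp [← hm]
  have hsplit : ∫ θ, (γ * a θ - Real.log (1 + c * b θ)) ∂Q =
      γ * (∫ θ, a θ ∂Q) - ∫ θ, Real.log (1 + c * b θ) ∂Q := by
    rw [integral_sub (ha.const_mul γ) hg_int, integral_const_mul]
  rw [hsplit]
  linarith
end

section
/- (Shattering extension lemma.) Let Z⁺ and Z⁻ be finite subsets of ℝ^n and let z_o ∈ ℝ^n. Then the following are equivalent: (1) there exist w ∈ ℝ^n and b ∈ ℝ with ⟨w, z⟩ > b for all z ∈ Z⁺, ⟨w, z⟩ < b for all z ∈ Z⁻, and ⟨w, z_o⟩ = b; (2) there exist w₁ ∈ ℝ^n, b₁ ∈ ℝ with ⟨w₁, z⟩ > b₁ for all z ∈ Z⁺ ∪ {z_o} and ⟨w₁, z⟩ < b₁ for all z ∈ Z⁻, and there exist w₂ ∈ ℝ^n, b₂ ∈ ℝ with ⟨w₂, z⟩ > b₂ for all z ∈ Z⁺ and ⟨w₂, z⟩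 < b₂ for all z ∈ Z⁻ ∪ {z_o}. -/
open scoped RealInnerProductSpace

/-- Shattering extension lemma: a dichotomy `(Z⁺, Z⁻)` is separable by a hyperplane
passing through `z_o` if and only if both extended dichotomies `(Z⁺ ∪ {z_o}, Z⁻)` and
`(Z⁺, Z⁻ ∪ {z_o})` are linearly separable. -/
theorem shattering_extension
    (n : ℕ) (Zp Zm : Set (EuclideanSpace ℝ (Fin n))) (hZp : Zp.Finite) (hZm : Zm.Finite)
    (zo : EuclideanSpace ℝ (Fin n)) :
    (∃ (w : EuclideanSpace ℝ (Fin n)) (b : ℝ),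
        (∀ z ∈ Zp, b < ⟪w, z⟫) ∧ (∀ z ∈ Zm, ⟪w, z⟫ < b) ∧ ⟪w, zo⟫ = b) ↔
    ((∃ (w₁ : EuclideanSpace ℝ (Fin n)) (b₁ : ℝ),
        (∀ z ∈ Zp ∪ {zo}, b₁ < ⟪w₁, z⟫) ∧ (∀ z ∈ Zm, ⟪w₁, z⟫ < b₁)) ∧
     (∃ (w₂ : EuclideanSpace ℝ (Fin n)) (b₂ : ℝ),
        (∀ z ∈ Zp, b₂ < ⟪w₂, z⟫) ∧ (∀ z ∈ Zm ∪ {zo}, ⟪w₂, z⟫ < b₂))) := by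
  constructor
  · rintro ⟨w, b, hp, hm, ho⟩
    constructor
    · -- lower b a bit
      classical
      obtain ⟨m, hmlt, hmge⟩ : ∃ m : ℝ, m < b ∧ ∀ z ∈ Zm, ⟪w, z⟫ ≤ m := by
        refine ⟨(insert (b - 1) (hZm.toFinset.image (fun z => ⟪w, z⟫))).max'
          ⟨b - 1, Finset.mem_insert_self _ _⟩, ?_, ?_⟩
        · have hmem := (insert (b - 1) (hZm.toFinset.image (fun z => ⟪w, z⟫))).max'_mem
            ⟨b - 1, Finset.mem_insert_self _ _⟩
          rcases Finset.mem_insert.1 hmem with h | h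
          · rw [h]; linarith
          · obtain ⟨z, hz, hzeq⟩ := Finset.mem_image.1 h
            rw [← hzeq]; exact hm z (hZm.mem_toFinset.1 hz)
        · intro z hz
          exact Finset.le_max' _ _
            (Finset.mem_insert_of_mem (Finset.mem_image.2 ⟨z, hZm.mem_toFinset.2 hz, rfl⟩))
      refine ⟨w, (m + b) / 2, ?_, ?_⟩
      · intro z hz
        rcases hz with hz | hz
        · have := hp z hz; linarith
        · simp only [Set.mem_singleton_iff] at hz; subst hz; linarith [ho]
      · intro z hz
        have hle := hmge z hz
        linarith
    · -- raise b a bit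
      classical
      obtain ⟨m, hmgt, hmle⟩ : ∃ m : ℝ, b < m ∧ ∀ z ∈ Zp, m ≤ ⟪w, z⟫ := by
        refine ⟨(insert (b + 1) (hZp.toFinset.image (fun z => ⟪w, z⟫))).min'
          ⟨b + 1, Finset.mem_insert_self _ _⟩, ?_, ?_⟩
        · have hmem := (insert (b + 1) (hZp.toFinset.image (fun z => ⟪w, z⟫))).min'_mem
            ⟨b + 1, Finset.mem_insert_self _ _⟩
          rcases Finset.mem_insert.1 hmem with h | h
          · rw [h]; linarith
          · obtain ⟨z, hz, hzeq⟩ := Finset.mem_image.1 h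
            rw [← hzeq]; exact hp z (hZp.mem_toFinset.1 hz)
        · intro z hz
          exact Finset.min'_le _ _
            (Finset.mem_insert_of_mem (Finset.mem_image.2 ⟨z, hZp.mem_toFinset.2 hz, rfl⟩))
      refine ⟨w, (b + m) / 2, ?_, ?_⟩
      · intro z hz
        have hle := hmle z hz
        linarith
      · intro z hz
        rcases hz with hz | hz
        · have := hm z hz; linarith
        · simp only [Set.mem_singleton_iff] at hz; subst hz; linarith [ho]
  · rintro ⟨⟨w₁, b₁, hp₁, hm₁⟩, ⟨w₂, b₂, hp₂, hm₂⟩⟩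
    have h1 : b₁ < ⟪w₁, zo⟫ := hp₁ zo (Or.inr rfl)
    have h2 : ⟪w₂, zo⟫ < b₂ := hm₂ zo (Or.inr rfl)
    set a : ℝ := ⟪w₁, zo⟫ - b₁ with ha
    set c : ℝ := b₂ - ⟪w₂, zo⟫ with hc
    have hapos : 0 < a := sub_pos.2 h1
    have hcpos : 0 < c := sub_pos.2 h2
    set t : ℝ := c / (a + c) with ht
    have hac : 0 < a + c := by linarith
    have ht0 : 0 < t := div_pos hcpos hac
    have ht1 : t < 1 := by
      rw [ht, div_lt_one hac]; linarith
    refine ⟨t • w₁ + (1 - t) • w₂, t * b₁ + (1 - t) * b₂, ?_, ?_, ?_⟩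
    all_goals
      simp only [inner_add_left, real_inner_smul_left]
    · intro z hz
      have := hp₁ z (Or.inl hz)
      have := hp₂ z hz
      nlinarith
    · intro z hz
      have := hm₁ z hz
      have := hm₂ z (Or.inl hz)
      nlinarith
    · have : t * a = (1 - t) * c := by
        rw [ht]; field_simp; ring
      nlinarith [this]
end
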